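/- arXiv:1610.07690 — 3 statements merged into one kernel-verified Lean document; each statement's English description precedes it below -/
import Mathlib

section
/- The map sending a smooth function f : ℝ → ℝ to its formal Taylor series at a point x₀ after composition commutes appropriately: for smooth f, g, the formal Taylor series of f ∘ g at x₀ equals the formal composition of the Taylor series of f at g(x₀) with the Taylor series of g at x₀ minus its constant term (Faà di Bruno / composition of formal power series). -/
open PowerSeries

/-- Composition of formal power series (well defined when the constant term of `G`
is zero): the `n`-th coefficient only depends on the powers `G^k` for `k ≤ n`. -/
noncomputable def formalComp (F G : PowerSeries ℝ) : PowerSeries ℝ :=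
  PowerSeries.mk fun n =>
    PowerSeries.coeff n
      (∑ k ∈ Finset.range (n + 1), PowerSeries.C (PowerSeries.coeff k F) * G ^ k)

/-- Formal Taylor series of `f` at `x₀`. -/
noncomputable def taylorPS (f : ℝ → ℝ) (x₀ : ℝ) : PowerSeries ℝ :=
  PowerSeries.mk fun n => iteratedDeriv n f x₀ / n.factorial

lemma coeff_pow_eq_zero' {G : PowerSeries ℝ} (hG : constantCoeff G = 0) {n k : ℕ}
    (h : n < k) : coeff n (G ^ k) = 0 := by
  have : (X : PowerSeries ℝ) ^ k ∣ G ^ k := pow_dvd_pow_of_dvd (X_dvd_iff.mpr hG) k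
  exact X_pow_dvd_iff.mp this n h

lemma coeff_formalComp_trunc (F G : PowerSeries ℝ) (hG : constantCoeff G = 0)
    {n N : ℕ} (h : n ≤ N) :
    coeff n (formalComp F G) =
      coeff n (∑ k ∈ Finset.range (N + 1), C (coeff k F) * G ^ k) := by
  rw [formalComp, coeff_mk, map_sum, map_sum]
  apply Finset.sum_subset (Finset.range_subset_range.mpr (by omega))
  intro k hk hk'
  simp only [Finset.mem_range] at hk hk'
  rw [coeff_C_mul, coeff_pow_eq_zero' hG (by omega), mul_zero]

/-- Formal chain rule for `formalComp`. -/
lemma derivative_formalComp (F G : PowerSeries ℝ) (hG : constantCoeff G = 0) :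
    d⁄dX ℝ (formalComp F G) = formalComp (d⁄dX ℝ F) G * d⁄dX ℝ G := by
  ext n
  rw [coeff_derivative, coeff_formalComp_trunc F G hG (Nat.le_refl (n + 1)), ← coeff_derivative]
  have hdS : d⁄dX ℝ (∑ k ∈ Finset.range (n + 1 + 1), C (coeff k F) * G ^ k) =
      (∑ j ∈ Finset.range (n + 1), C (coeff j (d⁄dX ℝ F)) * G ^ j) * d⁄dX ℝ G := by
    rw [map_sum, Finset.sum_range_succ']
    have h0 : d⁄dX ℝ (C (coeff 0 F) * G ^ 0) = 0 := by
      simp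
    rw [h0, add_zero, Finset.sum_mul]
    refine Finset.sum_congr rfl fun i _ => ?_
    simp only [Derivation.leibniz, derivative_C, smul_zero, add_zero, smul_eq_mul,
      Derivation.leibniz_pow, Nat.add_sub_cancel, coeff_derivative, map_mul, nsmul_eq_mul]
    rw [show ((i : ℝ) + 1) = ((i + 1 : ℕ) : ℝ) by push_cast; ring, map_natCast]
    push_cast
    ring
  rw [hdS, coeff_mul, coeff_mul]
  refine Finset.sum_congr rfl fun p hp => ?_
  have hp1 : p.1 ≤ n := by
    have := Finset.HasAntidiagonal.antidiagonal.fst_le hp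
    omega
  rw [← coeff_formalComp_trunc (d⁄dX ℝ F) G hG hp1]

lemma coeff_taylorPS (f : ℝ → ℝ) (x : ℝ) (n : ℕ) :
    coeff n (taylorPS f x) = iteratedDeriv n f x / n.factorial := by
  rw [taylorPS, coeff_mk]

lemma taylorPS_deriv (f : ℝ → ℝ) (x : ℝ) :
    taylorPS (deriv f) x = d⁄dX ℝ (taylorPS f x) := by
  ext n
  rw [coeff_derivative, coeff_taylorPS, coeff_taylorPS, ← iteratedDeriv_succ',
    Nat.factorial_succ]
  have h1 : (n.factorial : ℝ) ≠ 0 := Nat.cast_ne_zero.mpr n.factorial_ne_zero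
  have h2 : ((n : ℝ) + 1) ≠ 0 := by positivity
  push_cast
  field_simp

lemma taylorPS_add {u v : ℝ → ℝ} (hu : ContDiff ℝ (⊤ : ℕ∞) u) (hv : ContDiff ℝ (⊤ : ℕ∞) v)
    (x : ℝ) : taylorPS (fun y => u y + v y) x = taylorPS u x + taylorPS v x := by
  ext n
  rw [map_add, coeff_taylorPS, coeff_taylorPS, coeff_taylorPS]
  have := iteratedDerivWithin_add (Set.mem_univ x) uniqueDiffOn_univ
    (f := u) (g := v) (n := n)
    (hu.contDiffWithinAt.of_le (by exact_mod_cast le_top)) (hv.contDiffWithinAt.of_le (by exact_mod_cast le_top))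
  simp only [iteratedDerivWithin_univ] at this
  have heq : (fun y => u y + v y) = u + v := rfl
  rw [heq, this, add_div]

lemma taylorPS_mul {u v : ℝ → ℝ} (hu : ContDiff ℝ (⊤ : ℕ∞) u) (hv : ContDiff ℝ (⊤ : ℕ∞) v)
    (x : ℝ) (n : ℕ) :
    coeff n (taylorPS (fun y => u y * v y) x) = coeff n (taylorPS u x * taylorPS v x) := by
  induction n generalizing u v with
  | zero =>
    rw [coeff_taylorPS]
    rw [PowerSeries.coeff_zero_eq_constantCoeff, map_mul]
    simp [taylorPS, constantCoeff_mk]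
  | succ n ih =>
    have hu' : Differentiable ℝ u := hu.differentiable (by simp)
    have hv' : Differentiable ℝ v := hv.differentiable (by simp)
    have hdu : ContDiff ℝ (⊤ : ℕ∞) (deriv u) := (contDiff_infty_iff_deriv.mp hu).2
    have hdv : ContDiff ℝ (⊤ : ℕ∞) (deriv v) := (contDiff_infty_iff_deriv.mp hv).2
    have hderiv : deriv (fun y => u y * v y) =
        fun y => deriv u y * v y + u y * deriv v y := by
      funext y
      exact deriv_mul (hu'.differentiableAt) (hv'.differentiableAt)
    have key : coeff n (taylorPS (deriv fun y => u y * v y) x) =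
        coeff n (d⁄dX ℝ (taylorPS u x * taylorPS v x)) := by
      rw [hderiv, taylorPS_add ((hdu.mul hv)) ((hu.mul hdv)), map_add, ih hdu hv, ih hu hdv,
        Derivation.leibniz, smul_eq_mul, smul_eq_mul, map_add, taylorPS_deriv, taylorPS_deriv]
      ring_nf
    have lhs : coeff n (taylorPS (deriv fun y => u y * v y) x) =
        coeff (n + 1) (taylorPS (fun y => u y * v y) x) * (n + 1) := by
      rw [taylorPS_deriv, coeff_derivative]
    rw [coeff_derivative] at key
    exact mul_right_cancel₀ (by positivity : ((n : ℝ) + 1) ≠ 0) (lhs.symm.trans key)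

lemma taylor_series_comp_aux (g : ℝ → ℝ) (x₀ : ℝ) (hg : ContDiff ℝ (⊤ : ℕ∞) g) :
    ∀ n : ℕ, ∀ f : ℝ → ℝ, ContDiff ℝ (⊤ : ℕ∞) f →
      coeff n (taylorPS (f ∘ g) x₀) =
        coeff n (formalComp (taylorPS f (g x₀)) (taylorPS g x₀ - PowerSeries.C (g x₀))) := by
  set G : PowerSeries ℝ := taylorPS g x₀ - PowerSeries.C (g x₀) with hGdef
  have hG : constantCoeff G = 0 := by
    simp [hGdef, taylorPS, constantCoeff_mk]
  have hdG : d⁄dX ℝ G = d⁄dX ℝ (taylorPS g x₀) := by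
    rw [hGdef, map_sub, derivative_C, sub_zero]
  intro n
  induction n using Nat.strong_induction_on with
  | _ n ih =>
    intro f hf
    match n with
    | 0 =>
      rw [coeff_taylorPS, coeff_formalComp_trunc _ _ hG (Nat.le_refl 0)]
      simp [coeff_taylorPS, Function.comp]
    | Nat.succ n =>
      have hdf : ContDiff ℝ (⊤ : ℕ∞) (deriv f) := (contDiff_infty_iff_deriv.mp hf).2
      have hfg : ContDiff ℝ (⊤ : ℕ∞) (deriv f ∘ g) := hdf.comp hg
      have hdg : ContDiff ℝ (⊤ : ℕ∞) (deriv g) := (contDiff_infty_iff_deriv.mp hg).2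
      have hderiv : deriv (f ∘ g) = fun y => (deriv f ∘ g) y * deriv g y := by
        funext y
        exact deriv_comp y ((hf.differentiable (by simp)).differentiableAt)
          ((hg.differentiable (by simp)).differentiableAt)
      have lhs : coeff n (taylorPS (deriv (f ∘ g)) x₀) =
          coeff (n + 1) (taylorPS (f ∘ g) x₀) * (n + 1) := by
        rw [taylorPS_deriv, coeff_derivative]
      have key : coeff n (taylorPS (deriv (f ∘ g)) x₀) =
          coeff (n + 1) (formalComp (taylorPS f (g x₀)) G) * (n + 1) := by
        rw [hderiv, taylorPS_mul hfg hdg, ← coeff_derivative,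
          derivative_formalComp _ _ hG, coeff_mul, coeff_mul]
        refine Finset.sum_congr rfl fun p hp => ?_
        have hp1 : p.1 ≤ n := Finset.HasAntidiagonal.antidiagonal.fst_le hp
        have h1 : coeff p.1 (taylorPS (deriv f ∘ g) x₀) =
            coeff p.1 (formalComp (d⁄dX ℝ (taylorPS f (g x₀))) G) := by
          rw [← taylorPS_deriv]
          exact ih p.1 (by omega) (deriv f) hdf
        have h2 : coeff p.2 (taylorPS (deriv g) x₀) = coeff p.2 (d⁄dX ℝ G) := by
          rw [hdG, taylorPS_deriv]
        rw [h1, h2]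
      exact mul_right_cancel₀ (by positivity : ((n : ℝ) + 1) ≠ 0) (lhs.symm.trans key)

/-- Faà di Bruno / composition of formal power series: the Taylor series of `f ∘ g`
at `x₀` is the formal composition of the Taylor series of `f` at `g x₀` with the
Taylor series of `g` at `x₀` minus its constant term. -/
theorem taylor_series_comp (f g : ℝ → ℝ) (x₀ : ℝ)
    (hf : ContDiff ℝ (⊤ : ℕ∞) f) (hg : ContDiff ℝ (⊤ : ℕ∞) g) :
    taylorPS (f ∘ g) x₀ =
      formalComp (taylorPS f (g x₀)) (taylorPS g x₀ - PowerSeries.C (g x₀)) := by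
  ext n
  exact taylor_series_comp_aux g x₀ (hg.of_le (by simp)) n f (hf.of_le (by simp))
end

section
/- Faà di Bruno's formula: for smooth functions f, g : ℝ → ℝ, the n-th derivative of the composition satisfies (f∘g)⁽ⁿ⁾(x) = ∑_{λ ⊢ n} n! · f⁽|λ|⁾(g(x)) · ∏_{(l with multiplicity k) ∈ λ} (g⁽ˡ⁾(x)/l!)ᵏ · (1/k!), where the sum is over partitions λ of n and |λ| is the number of parts. -/
/-!
Induction on `n`, with the right-hand side written as
`∑_λ n! / ∏ₗ kₗ! · f⁽|λ|⁾(g x) · ∏_{l ∈ λ} g⁽ˡ⁾(x) / l!`.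
Differentiating such a monomial either raises the order of `f` and multiplies by
`g' = g⁽¹⁾ / 1!` (a new part `1`), or turns one factor `g⁽ᵃ⁾ / a!` into `(a + 1) g⁽ᵃ⁺¹⁾ / (a + 1)!`
(the part `a` becomes `a + 1`). Both cases read "bump a part `a` of `0 :: λ`".
To match coefficients, write each term of the formula for `n + 1` as a sum over the distinct parts
`b` of `μ ⊢ n + 1`, with shares `b k_b / (n + 1)` that add up to `1`; pairs `(μ, b)` correspond
bijectively to pairs `(λ, a)` with `a ∈ 0 :: λ` via bumping, and the coefficients agree because
`∏ₗ kₗ!` changes by exactly the factor `k_b` when `b` is decremented.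
-/

open scoped Nat

namespace Multiset

variable {α : Type*} [DecidableEq α]

def prodFactorialCount (m : Multiset α) : ℕ := ∏ a ∈ m.toFinset, (m.count a)!

theorem prodFactorialCount_pos (m : Multiset α) : 0 < m.prodFactorialCount :=
  Finset.prod_pos fun _ _ => Nat.factorial_pos _

theorem prodFactorialCount_cons (a : α) (m : Multiset α) :
    (a ::ₘ m).prodFactorialCount = (m.count a + 1) * m.prodFactorialCount := by
  have hsub : m.toFinset ⊆ (a ::ₘ m).toFinset := toFinset_subset.2 (subset_cons m a)
  have hzero : ∀ b ∈ (a ::ₘ m).toFinset, b ∉ m.toFinset → (m.count b)! = 1 := by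
    intro b _ hb
    rw [count_eq_zero.2 (by simpa using hb), Nat.factorial_zero]
  have ha : a ∈ (a ::ₘ m).toFinset := by simp
  rw [prodFactorialCount, prodFactorialCount, Finset.prod_subset hsub hzero,
    ← Finset.mul_prod_erase _ _ ha, ← Finset.mul_prod_erase _ _ ha, count_cons_self,
    Nat.factorial_succ, mul_assoc]
  congr 2
  exact Finset.prod_congr rfl fun b hb => by rw [count_cons_of_ne (Finset.ne_of_mem_erase hb)]

theorem prodFactorialCount_eq_count_mul {a : α} {m : Multiset α} (h : a ∈ m) :
    m.prodFactorialCount = m.count a * (m.erase a).prodFactorialCount := by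
  conv_lhs => rw [← cons_erase h]
  rw [prodFactorialCount_cons, count_erase_self, Nat.sub_add_cancel (count_pos.2 h)]

end Multiset

namespace Nat.Partition

variable {n : ℕ}

theorem zero_notMem_parts (p : n.Partition) : 0 ∉ p.parts := fun h => (p.parts_pos h).false

theorem card_parts_le (p : n.Partition) : Multiset.card p.parts ≤ n := by
  simpa [p.parts_sum] using Multiset.card_nsmul_le_sum (a := 1) fun _ h => p.parts_pos h

/-- For `a = 0` this adds a new part `1`. -/
def bump (p : n.Partition) (a : ℕ) (ha : a ∈ 0 ::ₘ p.parts) : (n + 1).Partition where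
  parts := (a + 1) ::ₘ p.parts.erase a
  parts_pos hi := by
    rcases Multiset.mem_cons.1 hi with rfl | hi
    · exact a.succ_pos
    · exact p.parts_pos (Multiset.mem_of_mem_erase hi)
  parts_sum := by
    rcases Multiset.mem_cons.1 ha with rfl | ha
    · rw [Multiset.erase_of_notMem p.zero_notMem_parts, Multiset.sum_cons, p.parts_sum, add_comm]
    · have := congrArg Multiset.sum (Multiset.cons_erase ha)
      rw [Multiset.sum_cons, p.parts_sum] at this
      rw [Multiset.sum_cons]
      omega

/-- For `b = 1` the part `0` left behind is dropped by `ofSums`. -/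
def unbump (q : (n + 1).Partition) (b : ℕ) (hb : b ∈ q.parts) : n.Partition :=
  ofSums n ((b - 1) ::ₘ q.parts.erase b) (by
    have := congrArg Multiset.sum (Multiset.cons_erase hb)
    rw [Multiset.sum_cons, q.parts_sum] at this
    have := q.parts_pos hb
    rw [Multiset.sum_cons]
    omega)

@[simp]
theorem bump_parts (p : n.Partition) (a : ℕ) (ha : a ∈ 0 ::ₘ p.parts) :
    (p.bump a ha).parts = (a + 1) ::ₘ p.parts.erase a := rfl

theorem unbump_bump (p : n.Partition) (a : ℕ) (ha : a ∈ 0 ::ₘ p.parts) :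
    (p.bump a ha).unbump (a + 1) (Multiset.mem_cons_self _ _) = p := by
  ext1
  simp only [unbump, bump_parts, ofSums_parts, Multiset.erase_cons_head, Nat.add_sub_cancel]
  rcases Multiset.mem_cons.1 ha with rfl | ha
  · rw [Multiset.erase_of_notMem p.zero_notMem_parts]
    simpa using fun b hb => (p.parts_pos hb).ne'
  · rw [Multiset.cons_erase ha, Multiset.filter_eq_self.2 fun b hb => (p.parts_pos hb).ne']

theorem sub_one_mem_zero_cons_unbump (q : (n + 1).Partition) (b : ℕ) (hb : b ∈ q.parts) :
    b - 1 ∈ 0 ::ₘ (q.unbump b hb).parts := by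
  rcases Nat.lt_or_ge (b - 1) 1 with h | h
  · simp [show b - 1 = 0 by omega]
  · simp [unbump, show b - 1 ≠ 0 by omega]

theorem bump_unbump (q : (n + 1).Partition) (b : ℕ) (hb : b ∈ q.parts) :
    (q.unbump b hb).bump (b - 1) (q.sub_one_mem_zero_cons_unbump b hb) = q := by
  ext1
  have hpos : (q.parts.erase b).filter (· ≠ 0) = q.parts.erase b :=
    Multiset.filter_eq_self.2 fun c hc => (q.parts_pos (Multiset.mem_of_mem_erase hc)).ne'
  simp only [unbump, bump_parts, ofSums_parts, Nat.sub_add_cancel (q.parts_pos hb)]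
  rcases Nat.lt_or_ge (b - 1) 1 with h | h
  · rw [show b - 1 = 0 by omega, Multiset.filter_cons_of_neg _ (by simp), hpos,
      Multiset.erase_of_notMem fun h => (q.parts_pos (Multiset.mem_of_mem_erase h)).false,
      Multiset.cons_erase hb]
  · rw [Multiset.filter_cons_of_pos _ (by omega), hpos, Multiset.erase_cons_head,
      Multiset.cons_erase hb]

theorem count_mul_prodFactorialCount_bump (p : n.Partition) (a : ℕ) (ha : a ∈ 0 ::ₘ p.parts) :
    (0 ::ₘ p.parts).count a * (p.bump a ha).parts.prodFactorialCount =
      (p.bump a ha).parts.count (a + 1) * p.parts.prodFactorialCount := by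
  suffices (0 ::ₘ p.parts).count a * (p.parts.erase a).prodFactorialCount =
      p.parts.prodFactorialCount by
    rw [bump_parts, Multiset.prodFactorialCount_eq_count_mul (Multiset.mem_cons_self (a + 1) _),
      Multiset.erase_cons_head, ← this]
    ring
  rcases Multiset.mem_cons.1 ha with rfl | ha
  · rw [Multiset.count_cons_self, Multiset.count_eq_zero.2 p.zero_notMem_parts,
      Multiset.erase_of_notMem p.zero_notMem_parts, zero_add, one_mul]
  · rw [Multiset.count_cons_of_ne (p.parts_pos ha).ne',
      ← Multiset.prodFactorialCount_eq_count_mul ha]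

section Field

variable {𝕜 : Type*} [Field 𝕜] [CharZero 𝕜]

theorem count_div_prodFactorialCount_bump (p : n.Partition) (a : ℕ) (ha : a ∈ 0 ::ₘ p.parts) :
    ((0 ::ₘ p.parts).count a / p.parts.prodFactorialCount : 𝕜) =
      (p.bump a ha).parts.count (a + 1) / (p.bump a ha).parts.prodFactorialCount := by
  rw [div_eq_div_iff (by exact_mod_cast p.parts.prodFactorialCount_pos.ne')
    (by exact_mod_cast (p.bump a ha).parts.prodFactorialCount_pos.ne')]
  exact_mod_cast p.count_mul_prodFactorialCount_bump a ha

theorem sum_succ_eq_sum_bump (n : ℕ) (T : Multiset ℕ → 𝕜) :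
    ∑ q : (n + 1).Partition, ((n + 1)! / q.parts.prodFactorialCount : 𝕜) * T q.parts =
      ∑ p : n.Partition, (n ! / p.parts.prodFactorialCount : 𝕜) *
        ((0 ::ₘ p.parts).map fun a : ℕ =>
          ((a : 𝕜) + 1) * T ((a + 1) ::ₘ p.parts.erase a)).sum := by
  have hshare (q : (n + 1).Partition) :
      ((n + 1)! / q.parts.prodFactorialCount : 𝕜) * T q.parts =
        ∑ b ∈ q.parts.toFinset,
          (n ! / q.parts.prodFactorialCount : 𝕜) * (q.parts.count b * b) * T q.parts := by
    have hsum : ((n + 1 : ℕ) : 𝕜) = ∑ b ∈ q.parts.toFinset, (q.parts.count b * b : 𝕜) := by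
      exact_mod_cast q.parts_sum.symm.trans (Finset.sum_multiset_count q.parts)
    rw [← Finset.sum_mul, ← Finset.mul_sum, ← hsum, Nat.factorial_succ]
    push_cast
    ring
  simp only [hshare, Finset.sum_multiset_map_count, Finset.mul_sum, Finset.sum_sigma']
  symm
  refine Finset.sum_bij' (fun y hy => Sigma.mk (y.1.bump y.2 (by simpa using hy)) (y.2 + 1))
    (fun x hx => Sigma.mk (x.1.unbump x.2 (by simpa using hx)) (x.2 - 1)) ?_ ?_ ?_ ?_ ?_
  · rintro ⟨p, a⟩ -
    simp
  · rintro ⟨q, b⟩ hb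
    simpa using q.sub_one_mem_zero_cons_unbump b (by simpa using hb)
  · rintro ⟨p, a⟩ -
    simp only [unbump_bump, Nat.add_sub_cancel]
  · rintro ⟨q, b⟩ hb
    simp only [bump_unbump, Nat.sub_add_cancel (q.parts_pos (by simpa using hb))]
  · rintro ⟨p, a⟩ ha
    have ha : a ∈ 0 ::ₘ p.parts := by simpa using ha
    dsimp only
    rw [nsmul_eq_mul, ← bump_parts p a ha]
    push_cast
    linear_combination (n ! * (a + 1) * T (p.bump a ha).parts : 𝕜) *
      p.count_div_prodFactorialCount_bump (𝕜 := 𝕜) a ha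

end Field

end Nat.Partition

section Calculus

variable {𝕜 : Type*} [NontriviallyNormedField 𝕜]

theorem HasDerivAt.multiset_prod {ι : Type*} [DecidableEq ι] {u : Multiset ι} {f : ι → 𝕜 → 𝕜}
    {f' : ι → 𝕜} {x : 𝕜} (hf : ∀ i ∈ u, HasDerivAt (f i) (f' i) x) :
    HasDerivAt (fun y => (u.map (f · y)).prod)
      (u.map fun i => ((u.erase i).map (f · x)).prod * f' i).sum x := by
  refine (HasFDerivAt.multiset_prod (hf · · |>.hasFDerivAt)).hasDerivAt.congr_deriv ?_
  rw [← ContinuousLinearMap.apply_apply (𝕜 := 𝕜) (1 : 𝕜), map_multiset_sum, Multiset.map_map]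
  simp

theorem ContDiff.hasDerivAt_iteratedDeriv {F : Type*} [NormedAddCommGroup F] [NormedSpace 𝕜 F]
    {N : WithTop ℕ∞} {f : 𝕜 → F} (hf : ContDiff 𝕜 N f) {k : ℕ} (hk : k < N) (x : 𝕜) :
    HasDerivAt (iteratedDeriv k f) (iteratedDeriv (k + 1) f x) x := by
  rw [iteratedDeriv_succ]
  exact (hf.differentiable_iteratedDeriv k hk x).hasDerivAt

theorem ContDiff.hasDerivAt_iteratedDeriv_div_factorial [CharZero 𝕜] {N : WithTop ℕ∞}
    {f : 𝕜 → 𝕜} (hf : ContDiff 𝕜 N f) {k : ℕ} (hk : k < N) (x : 𝕜) :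
    HasDerivAt (fun y => iteratedDeriv k f y / k !)
      ((k + 1) * (iteratedDeriv (k + 1) f x / (k + 1)!)) x := by
  refine ((hf.hasDerivAt_iteratedDeriv hk x).div_const (k ! : 𝕜)).congr_deriv ?_
  rw [Nat.factorial_succ]
  push_cast
  field_simp

def faaDiBrunoMonomial (u v : ℕ → 𝕜) (m : Multiset ℕ) : 𝕜 :=
  u (Multiset.card m) * (m.map v).prod

theorem hasDerivAt_faaDiBrunoMonomial {u v : ℕ → 𝕜 → 𝕜} {x : 𝕜} {m : Multiset ℕ} (h0 : 0 ∉ m)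
    (hu : HasDerivAt (u (Multiset.card m)) (u (Multiset.card m + 1) x * v 1 x) x)
    (hv : ∀ l ∈ m, HasDerivAt (v l) ((l + 1) * v (l + 1) x) x) :
    HasDerivAt (fun y => faaDiBrunoMonomial (u · y) (v · y) m)
      ((0 ::ₘ m).map fun a : ℕ =>
        (a + 1) * faaDiBrunoMonomial (u · x) (v · x) ((a + 1) ::ₘ m.erase a)).sum x := by
  refine (hu.mul (HasDerivAt.multiset_prod hv)).congr_deriv ?_
  have hbump : ∀ a ∈ m,
      (a + 1 : 𝕜) * faaDiBrunoMonomial (u · x) (v · x) ((a + 1) ::ₘ m.erase a) =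
        u (Multiset.card m) x * (((m.erase a).map (v · x)).prod * ((a + 1) * v (a + 1) x)) := by
    intro a ha
    rw [faaDiBrunoMonomial, Multiset.card_cons, Multiset.card_erase_add_one ha,
      Multiset.map_cons, Multiset.prod_cons]
    ring
  rw [Multiset.map_cons, Multiset.sum_cons, Multiset.map_congr rfl hbump,
    Multiset.sum_map_mul_left, faaDiBrunoMonomial, Multiset.erase_of_notMem h0,
    Multiset.card_cons, Multiset.map_cons, Multiset.prod_cons]
  push_cast
  ring

theorem iteratedDeriv_comp_eq_sum_faaDiBrunoMonomial [CharZero 𝕜] {n : ℕ} {f g : 𝕜 → 𝕜}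
    (hf : ContDiff 𝕜 n f) (hg : ContDiff 𝕜 n g) (x : 𝕜) :
    iteratedDeriv n (f ∘ g) x = ∑ p : n.Partition, (n ! / p.parts.prodFactorialCount : 𝕜) *
      faaDiBrunoMonomial (iteratedDeriv · f (g x)) (fun l => iteratedDeriv l g x / l !)
        p.parts := by
  induction n generalizing x with
  | zero => simp [faaDiBrunoMonomial, Multiset.prodFactorialCount]
  | succ n ih =>
    have hle : (n : WithTop ℕ∞) ≤ (n + 1 : ℕ) := by exact_mod_cast n.le_succ
    have hlt {k : ℕ} (hk : k ≤ n) : (k : WithTop ℕ∞) < (n + 1 : ℕ) := by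
      exact_mod_cast Nat.lt_succ_of_le hk
    have hg' : HasDerivAt g (iteratedDeriv 1 g x / (1 : ℕ)!) x := by
      rw [iteratedDeriv_one, Nat.factorial_one, Nat.cast_one, div_one]
      exact (hg.differentiable (by simp) x).hasDerivAt
    have hterm (p : n.Partition) := hasDerivAt_faaDiBrunoMonomial p.zero_notMem_parts
      (u := fun k y => iteratedDeriv k f (g y)) (v := fun l y => iteratedDeriv l g y / l !)
      ((hf.hasDerivAt_iteratedDeriv (hlt p.card_parts_le) (g x)).comp x hg')
      (fun l hl => hg.hasDerivAt_iteratedDeriv_div_factorial (hlt (p.le_of_mem_parts hl)) x)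
    rw [iteratedDeriv_succ, funext (ih (hf.of_le hle) (hg.of_le hle)),
      (HasDerivAt.fun_sum fun p _ => (hterm p).const_mul _).deriv]
    exact (Nat.Partition.sum_succ_eq_sum_bump n _).symm

end Calculus

/-- Faà di Bruno's formula: the `n`-th derivative of a composition as a sum over
partitions `λ` of `n`, where `|λ| = λ.parts.card` is the number of parts and
`λ.parts.count l` is the multiplicity of the part `l`. -/
theorem faa_di_bruno (n : ℕ) (f g : ℝ → ℝ) (x : ℝ)
    (hf : ContDiff ℝ n f) (hg : ContDiff ℝ n g) :
    iteratedDeriv n (f ∘ g) x =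
      ∑ p : Nat.Partition n,
        (n.factorial : ℝ) * iteratedDeriv p.parts.card f (g x) *
          ∏ l ∈ p.parts.toFinset,
            (iteratedDeriv l g x / l.factorial) ^ (p.parts.count l) *
              (1 / (p.parts.count l).factorial) := by
  rw [iteratedDeriv_comp_eq_sum_faaDiBrunoMonomial hf hg x]
  refine Finset.sum_congr rfl fun p _ => ?_
  rw [faaDiBrunoMonomial, Finset.prod_mul_distrib, ← Finset.prod_multiset_map_count,
    Multiset.prodFactorialCount, Finset.prod_div_distrib, Finset.prod_const_one]
  push_cast
  ring
end

section
/- The function h ↦ f(g(x+h)) and the function given by the series ∑_λ(n) over partitions (Faà di Bruno coefficients of f, g at x) have the same n-th derivative at h = 0 for every n; hence if both are analytic in h near 0 they are equal on a neighborhood of 0. -/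
/-!
Near the base points, `f` and `h ↦ g (x + h)` are the sums of their Taylor series, so
`h ↦ f (g (x + h))` is the sum of the composed formal series, whose `n`-th coefficient is a sum
over the compositions of `n`. A composition contributes only through its underlying partition
`λ`, and exactly `|λ|! / ∏ k!` compositions (the distinct orderings of the parts) lie over `λ`;
this regroups the coefficient into `faaCoeff f g x n`. Functions that agree near `0` have the
same derivatives at `0`.
-/

open Filter

/-- The Faà di Bruno coefficient of `f, g` at `x`:
`∑_{λ⊢n} f⁽|λ|⁾(g(x)) ∏_{(l,k)∈λ} (g⁽ˡ⁾(x)/l!)ᵏ / k!`. -/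
noncomputable def faaCoeff (f g : ℝ → ℝ) (x : ℝ) (n : ℕ) : ℝ :=
  ∑ p : Nat.Partition n,
    iteratedDeriv p.parts.card f (g x) *
      ∏ l ∈ p.parts.toFinset,
        (iteratedDeriv l g x / l.factorial) ^ (p.parts.count l) /
          (p.parts.count l).factorial

open Finset Nat

namespace Multiset
variable {α : Type*} [DecidableEq α]

theorem prod_factorial_count_eq_count_mul_erase {s : Multiset α} {a : α} (ha : a ∈ s) :
    ∏ i ∈ s.toFinset, (s.count i)! =
      s.count a * ∏ i ∈ (s.erase a).toFinset, ((s.erase a).count i)! := by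
  obtain ⟨t, rfl⟩ := exists_cons_of_mem ha
  rw [erase_cons_head, toFinset_cons]
  by_cases hat : a ∈ t
  · have hat' := mem_toFinset.2 hat
    rw [Finset.insert_eq_of_mem hat', ← Finset.mul_prod_erase _ _ hat',
      ← Finset.mul_prod_erase _ _ hat', count_cons_self, factorial_succ, mul_assoc]
    congr 2
    refine Finset.prod_congr rfl fun i hi => ?_
    rw [count_cons_of_ne (Finset.ne_of_mem_erase hi)]
  · rw [Finset.prod_insert (by simpa using hat), count_cons_self, count_eq_zero_of_notMem hat]
    simp only [zero_add, factorial_one, one_mul]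
    refine Finset.prod_congr rfl fun i hi => ?_
    rw [count_cons_of_ne (by rintro rfl; exact hat (mem_toFinset.1 hi))]

theorem toFinset_lists_eq_biUnion {s : Multiset α} (hs : s ≠ 0) :
    s.lists.toFinset =
      s.toFinset.biUnion fun a => (s.erase a).lists.toFinset.image (List.cons a) := by
  ext l
  simp only [Finset.mem_biUnion, Finset.mem_image, Multiset.mem_toFinset, mem_lists_iff,
    quot_mk_to_coe]
  constructor
  · rintro rfl
    cases l with
    | nil => exact absurd rfl hs
    | cons a t => exact ⟨a, by simp, t, by simp, rfl⟩
  · rintro ⟨a, ha, t, ht, rfl⟩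
    rw [← cons_coe, ← ht, cons_erase ha]

theorem card_toFinset_lists_mul_prod_factorial_count (s : Multiset α) :
    #s.lists.toFinset * ∏ i ∈ s.toFinset, (s.count i)! = (card s)! := by
  induction s using strongInductionOn with
  | ih s ih =>
  rcases eq_or_ne s 0 with rfl | hs
  · rw [← coe_nil, lists_coe]
    simp
  have hdisj : (s.toFinset : Set α).PairwiseDisjoint
      fun a => (s.erase a).lists.toFinset.image (List.cons a) := by
    intro a _ b _ hab
    simp only [Function.onFun, Finset.disjoint_left, Finset.mem_image]
    rintro _ ⟨t, _, rfl⟩ ⟨t', _, h⟩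
    exact hab (List.cons.inj h).1.symm
  rw [toFinset_lists_eq_biUnion hs, card_biUnion hdisj, Finset.sum_mul]
  calc ∑ a ∈ s.toFinset, #((s.erase a).lists.toFinset.image (List.cons a)) *
        ∏ i ∈ s.toFinset, (s.count i)!
      = ∑ a ∈ s.toFinset, s.count a * (card s - 1)! := by
        refine Finset.sum_congr rfl fun a ha => ?_
        have ha := mem_toFinset.1 ha
        rw [Finset.card_image_of_injective _ List.cons_injective,
          prod_factorial_count_eq_count_mul_erase ha, mul_left_comm, ih _ (erase_lt.2 ha),
          card_erase_of_mem ha, pred_eq_sub_one]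
    _ = (card s)! := by
        rw [← Finset.sum_mul, toFinset_sum_count_eq, mul_factorial_pred (card_pos.2 hs).ne']

end Multiset

namespace Nat.Partition

theorem card_ofComposition_fiber_mul_prod_factorial_count {n : ℕ} (p : n.Partition) :
    #{c : Composition n | ofComposition n c = p} *
      ∏ i ∈ p.parts.toFinset, (p.parts.count i)! = (Multiset.card p.parts)! := by
  rw [← p.parts.card_toFinset_lists_mul_prod_factorial_count]
  congr 1
  refine card_nbij (fun c => c.blocks) (fun c hc => ?_) (fun c _ c' _ h => Composition.ext h)
    (fun l hl => ?_)
  · simp only [coe_filter, Set.mem_ofPred_eq, mem_univ, true_and] at hc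
    simp [← hc]
  · have hl : p.parts = l := by simpa using hl
    refine ⟨⟨l, fun hi => p.parts_pos (hl ▸ hi), ?_⟩, by simp [Partition.ext_iff, hl], rfl⟩
    rw [← Multiset.sum_coe, ← hl, p.parts_sum]

theorem sum_composition_eq_sum_partition {R : Type*} [CommSemiring R] (A B : ℕ → R) (n : ℕ) :
    ∑ c : Composition n, A c.length * ∏ i, B (c.blocksFun i) =
      ∑ p : n.Partition, #{c : Composition n | ofComposition n c = p} *
        (A (Multiset.card p.parts) * (p.parts.map B).prod) := by
  have hterm (c : Composition n) : A c.length * ∏ i, B (c.blocksFun i) =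
      A (Multiset.card (ofComposition n c).parts) * ((ofComposition n c).parts.map B).prod := by
    rw [ofComposition_parts, Multiset.coe_card, Multiset.map_coe, Multiset.prod_coe,
      ← c.ofFn_blocksFun, List.map_ofFn, List.prod_ofFn, List.length_ofFn]
    rfl
  simp_rw [hterm, ← Finset.sum_fiberwise (s := univ) (g := ofComposition n)]
  refine sum_congr rfl fun p _ => ?_
  rw [Finset.sum_congr rfl fun c hc => by rw [(mem_filter.1 hc).2], sum_const, nsmul_eq_mul]

theorem sum_composition_eq_sum_partition_div_factorial {K : Type*} [Field K] [CharZero K]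
    (A B : ℕ → K) (n : ℕ) :
    ∑ c : Composition n, A c.length * ∏ i, B (c.blocksFun i) =
      ∑ p : n.Partition, (Multiset.card p.parts)! * A (Multiset.card p.parts) *
        ∏ l ∈ p.parts.toFinset, B l ^ p.parts.count l / (p.parts.count l)! := by
  rw [sum_composition_eq_sum_partition]
  refine sum_congr rfl fun p _ => ?_
  rw [← p.card_ofComposition_fiber_mul_prod_factorial_count, prod_div_distrib,
    ← Finset.prod_multiset_map_count]
  have : (∏ l ∈ p.parts.toFinset, ((p.parts.count l)! : K)) ≠ 0 :=
    prod_ne_zero_iff.2 fun _ _ => Nat.cast_ne_zero.2 (factorial_ne_zero _)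
  push_cast
  field_simp

end Nat.Partition

namespace FormalMultilinearSeries

variable {𝕜 E : Type*} [NontriviallyNormedField 𝕜] [NormedAddCommGroup E] [NormedSpace 𝕜 E]

theorem coeff_comp (q : FormalMultilinearSeries 𝕜 𝕜 E) (p : FormalMultilinearSeries 𝕜 𝕜 𝕜)
    (n : ℕ) :
    (q.comp p).coeff n =
      ∑ c : Composition n, (∏ i, p.coeff (c.blocksFun i)) • q.coeff c.length := by
  simp only [coeff, FormalMultilinearSeries.comp, _root_.sum_apply]
  refine sum_congr rfl fun c _ => ?_
  rw [compAlongComposition_apply, apply_eq_prod_smul_coeff]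
  rfl

end FormalMultilinearSeries

open FormalMultilinearSeries in
theorem coeff_comp_taylorSeries_eq_faaCoeff (f g : ℝ → ℝ) (x : ℝ) (n : ℕ) :
    ((ofScalars ℝ fun k => iteratedDeriv k f (g x) / k !).comp
      (ofScalars ℝ fun l => iteratedDeriv l g x / l !)).coeff n = faaCoeff f g x n := by
  simp only [coeff_comp, coeff_ofScalars, smul_eq_mul]
  simp_rw [mul_comm (∏ _, _)]
  rw [Nat.Partition.sum_composition_eq_sum_partition_div_factorial
    (fun k => iteratedDeriv k f (g x) / k !) (fun l => iteratedDeriv l g x / l !), faaCoeff]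
  refine sum_congr rfl fun p _ => ?_
  rw [mul_div_cancel₀ _ (Nat.cast_ne_zero.2 (factorial_ne_zero _))]

open FormalMultilinearSeries in
theorem composition_eq_partition_series_general (f g : ℝ → ℝ) (x : ℝ)
    (hf : AnalyticAt ℝ f (g x)) (hg : AnalyticAt ℝ g x) :
    (∀ n : ℕ, iteratedDeriv n (fun h : ℝ => f (g (x + h))) 0 =
        iteratedDeriv n (fun h : ℝ => ∑' m : ℕ, faaCoeff f g x m * h ^ m) 0) ∧
      (fun h : ℝ => f (g (x + h))) =ᶠ[nhds 0]
        (fun h : ℝ => ∑' m : ℕ, faaCoeff f g x m * h ^ m) := by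
  have hp : HasFPowerSeriesAt (fun h => g (x + h))
      (ofScalars ℝ fun l => iteratedDeriv l g x / l !) 0 := by
    have hφ : AnalyticAt ℝ (fun h => g (x + h)) 0 := hg.comp_of_eq (by fun_prop) (add_zero x)
    simpa only [iteratedDeriv_comp_const_add, add_zero] using hφ.hasFPowerSeriesAt
  have hq : HasFPowerSeriesAt f (ofScalars ℝ fun k => iteratedDeriv k f (g x) / k !)
      (g (x + 0)) := by
    simpa only [add_zero] using hf.hasFPowerSeriesAt
  have heq : (fun h : ℝ => f (g (x + h))) =ᶠ[nhds 0]
      (fun h : ℝ => ∑' m : ℕ, faaCoeff f g x m * h ^ m) := by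
    filter_upwards [hasFPowerSeriesAt_iff.1 (hq.comp (f := fun h => g (x + h)) hp)] with h hsum
    simp_rw [coeff_comp_taylorSeries_eq_faaCoeff, zero_add, smul_eq_mul, mul_comm (h ^ _)]
      at hsum
    exact hsum.tsum_eq.symm
  exact ⟨fun n => heq.iteratedDeriv_eq n, heq⟩

/-- `h ↦ f(g(x+h))` and the partition series `h ↦ ∑ₙ hⁿ ∑_{λ⊢n} …` have the same
`n`-th derivative at `h = 0` for every `n`; hence, both being analytic near `0`,
they agree on a neighborhood of `0`. -/
theorem composition_eq_partition_series (f g : ℝ → ℝ) (x : ℝ)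
    (hf : AnalyticAt ℝ f (g x)) (hg : AnalyticAt ℝ g x)
    (hS : AnalyticAt ℝ (fun h : ℝ => ∑' n : ℕ, faaCoeff f g x n * h ^ n) 0) :
    (∀ n : ℕ, iteratedDeriv n (fun h : ℝ => f (g (x + h))) 0 =
        iteratedDeriv n (fun h : ℝ => ∑' m : ℕ, faaCoeff f g x m * h ^ m) 0) ∧
      (fun h : ℝ => f (g (x + h))) =ᶠ[nhds 0]
        (fun h : ℝ => ∑' m : ℕ, faaCoeff f g x m * h ^ m) :=
  composition_eq_partition_series_general f g x hf hg
end
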